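/- arXiv:1408.6774 — 3 statements merged into one kernel-verified Lean document; each statement's English description precedes it below -/
import Mathlib

section
/- Let A ∈ [0,1]^{n×n}, 0 < λ < 1, and let (K,L) be a partition of {1,…,n} into nonempty proper subsets such that ρ(A_{KK}) < λ and A^(λ)_{LK} ⊗ (A^(λ)_{KK})* ⊗ 𝟘_K ≤ 𝟘_L. Let S = A^(1)_{LL} ⊕ A^(1)_{LK} ⊗ (A^(λ)_{KK})* ⊗ A^(λ)_{KL} (the tropical Schur complement Schur^{(1)}(K,λ,A)). Then x ∈ [0,1]^n is a (K,L)-Łukasiewicz eigenvector of A associated with λ if and only if: for every j ∈ L, 0 ≤ x_j ≤ min(1 − λ, min_{i∈L}(−S_{ij})), and for every k ∈ K, x_k = max_{k'∈K} ( ((A^(λ)_{KK})*)_{kk'} + max( max_{j∈L}(a_{k'j} − λ + x_j), 1 − λ ) ). -/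
open Finset

/-- Max-plus matrix-vector product: `(A ⊗ x)_i = max_j (a_{ij} + x_j)`. -/
noncomputable def mpMulVec {ι κ : Type*} [Fintype κ] (A : ι → κ → ℝ) (x : κ → ℝ) (i : ι) : ℝ :=
  ⨆ j, (A i j + x j)

/-- Max-plus matrix-matrix product: `(A ⊗ B)_{ik} = max_j (a_{ij} + b_{jk})`. -/
noncomputable def mpMul {ι κ τ : Type*} [Fintype κ] (A : ι → κ → ℝ) (B : κ → τ → ℝ)
    (i : ι) (k : τ) : ℝ :=
  ⨆ j, (A i j + B j k)

/-- `mpPow1 A s` is the `(s+1)`-st max-plus power of `A`, i.e. `A^{⊗(s+1)}`. -/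
noncomputable def mpPow1 {ι : Type*} [Fintype ι] (A : ι → ι → ℝ) : ℕ → ι → ι → ℝ
  | 0 => A
  | (k + 1) => mpMul A (mpPow1 A k)

/-- Weight of the walk `P 0 → P 1 → ⋯ → P len` in the complete weighted digraph `D(B)`. -/
noncomputable def walkWeight {ι : Type*} (B : ι → ι → ℝ) (len : ℕ) (P : Fin (len + 1) → ι) : ℝ :=
  ∑ t : Fin len, B (P t.castSucc) (P t.succ)

/-- The maximum cycle mean `ρ(A)`: the maximum over all cycles (closed walks of length
`1 ≤ k ≤ n`) of the average weight of the cycle. -/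
noncomputable def maxCycleMean {ι : Type*} [Fintype ι] (A : ι → ι → ℝ) : ℝ :=
  sSup { r | ∃ k, 1 ≤ k ∧ k ≤ Fintype.card ι ∧
    ∃ P : Fin (k + 1) → ι, P 0 = P (Fin.last k) ∧ r = walkWeight A k P / (k : ℝ) }

/-- Kleene star of `A` (meaningful when `ρ(A) ≤ 0`):
`A*_{ii} = max(0, max_{1 ≤ k ≤ n-1} (A^{⊗k})_{ii})` and
`A*_{ij} = max_{1 ≤ k ≤ n-1} (A^{⊗k})_{ij}` for `i ≠ j`. -/
noncomputable def kleeneStar {ι : Type*} [Fintype ι] [DecidableEq ι] (A : ι → ι → ℝ)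
    (i j : ι) : ℝ :=
  if i = j then max 0 (⨆ m : Fin (Fintype.card ι - 1), mpPow1 A (m : ℕ) i i)
  else ⨆ m : Fin (Fintype.card ι - 1), mpPow1 A (m : ℕ) i j

/-- Max-Łukasiewicz matrix-vector product: `(A ⊗_L x)_i = max_j max(0, a_{ij} + x_j - 1)`. -/
noncomputable def lukMulVec {ι κ : Type*} [Fintype κ] (A : ι → κ → ℝ) (x : κ → ℝ) (i : ι) : ℝ :=
  ⨆ j, max 0 (A i j + x j - 1)

/-- Max-Łukasiewicz scalar action: `(λ ⊗_L x)_i = max(0, λ + x_i - 1)`. -/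
noncomputable def lukSMul {ι : Type*} (lam : ℝ) (x : ι → ℝ) (i : ι) : ℝ :=
  max 0 (lam + x i - 1)

/-- Max-Łukasiewicz matrix-matrix product: `(A ⊗_L B)_{ik} = max_j max(0, a_{ij} + b_{jk} - 1)`. -/
noncomputable def lukMul {ι κ τ : Type*} [Fintype κ] (A : ι → κ → ℝ) (B : κ → τ → ℝ)
    (i : ι) (k : τ) : ℝ :=
  ⨆ j, max 0 (A i j + B j k - 1)

/-- `lukPow1 A s` is the `(s+1)`-st Łukasiewicz power of `A`, i.e. `A^{⊗_L (s+1)}`. -/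
noncomputable def lukPow1 {ι : Type*} [Fintype ι] (A : ι → ι → ℝ) : ℕ → ι → ι → ℝ
  | 0 => A
  | (t + 1) => lukMul A (lukPow1 A t)

/-- Max-plus matrix-vector product of a real matrix with a vector over `ℝ ∪ {-∞}` (`EReal`). -/
noncomputable def mpMulVecE {ι κ : Type*} [Fintype κ] (A : ι → κ → ℝ) (v : κ → EReal)
    (i : ι) : EReal :=
  ⨆ j, ((A i j : EReal) + v j)

/-- Node `i` of the weighted digraph `D(B)` is secure if every walk starting at `i` has
nonpositive weight. -/
def SecureNode {ι : Type*} (B : ι → ι → ℝ) (i : ι) : Prop :=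
  ∀ (len : ℕ) (P : Fin (len + 1) → ι), P 0 = i → walkWeight B len P ≤ 0

/-- The partition `(K, L)` of `{1,…,n}` is secure with respect to `D(B)` (with parameter `λ`):
if `L = ∅` this means `D(B)` is `λ`-secure (every walk has weight `≤ λ`); otherwise it means
that every walk starting in `L` whose all other nodes lie in `K` has nonpositive weight.
(If `L` is everything, the latter condition holds trivially, matching the convention.) -/
def SecurePartition {n : ℕ} (B : Fin n → Fin n → ℝ) (lam : ℝ) (K L : Finset (Fin n)) : Prop :=
  if L = ∅ then
    ∀ (len : ℕ) (P : Fin (len + 1) → Fin n), walkWeight B len P ≤ lam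
  else
    ∀ (len : ℕ) (P : Fin (len + 1) → Fin n),
      P 0 ∈ L → (∀ t : Fin (len + 1), t ≠ 0 → P t ∈ K) → walkWeight B len P ≤ 0

/-!
On the rows of `K` the eigen-equation reads `x_K = A^{(λ)}_{KK} ⊗ x_K ⊕ c` with
`c = A^{(λ)}_{KL} ⊗ x_L ⊕ (1 - λ)`. Since `ρ(A_{KK}) < λ`, every cycle of `A^{(λ)}_{KK}` has negative
weight, and this equation has the unique solution `(A^{(λ)}_{KK})* ⊗ c`. On the rows of `L` the
eigen-equation says `a_{lj} + x_j ≤ 1` for all `j`; for `j ∈ K`, substituting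
`x_K = (A^{(λ)}_{KK})* ⊗ c` splits this into the hypothesis on `A^{(λ)}_{LK} ⊗ (A^{(λ)}_{KK})*`
and the bounds `x_j ≤ -S_{lj}`.
-/

theorem Monotone.map_ciSup_of_finite {α β ι : Type*} [ConditionallyCompleteLinearOrder α]
    [ConditionallyCompleteLinearOrder β] [Nonempty ι] [Finite ι] {g : α → β} (hg : Monotone g)
    (f : ι → α) : g (⨆ i, f i) = ⨆ i, g (f i) := by
  obtain ⟨i, hi⟩ := exists_eq_ciSup_of_finite (f := f)
  rw [← hi]
  exact le_antisymm (le_ciSup (Finite.bddAbove_range fun i => g (f i)) i)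
    (ciSup_le fun j => hg (hi ▸ le_ciSup (Finite.bddAbove_range f) j))

theorem forall_iff_of_union {κ : Type*} [Fintype κ] [DecidableEq κ] {K L : Finset κ}
    (hcover : K ∪ L = univ) {p : κ → Prop} : (∀ i, p i) ↔ (∀ k : K, p k) ∧ ∀ l : L, p l := by
  rw [Subtype.forall, Subtype.forall, ← forall_mem_union, hcover]
  simp

section Walks

variable {ι : Type*} (B : ι → ι → ℝ)

/-- Unlike in `walkWeight`, walks are indexed by `ℕ`, so that they can be shifted and spliced
without casts between `Fin` types. -/
def walkWeightNat (s : ℕ) (P : ℕ → ι) : ℝ :=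
  ∑ t ∈ range s, B (P t) (P (t + 1))

@[simp]
theorem walkWeightNat_zero (P : ℕ → ι) : walkWeightNat B 0 P = 0 :=
  sum_range_zero _

theorem walkWeightNat_succ (s : ℕ) (P : ℕ → ι) :
    walkWeightNat B (s + 1) P = B (P 0) (P 1) + walkWeightNat B s (fun t => P (t + 1)) := by
  rw [walkWeightNat, sum_range_succ', add_comm]
  rfl

theorem walkWeightNat_add (m k : ℕ) (P : ℕ → ι) :
    walkWeightNat B (m + k) P = walkWeightNat B m P + walkWeightNat B k (fun t => P (m + t)) := by
  simp only [walkWeightNat, sum_range_add, add_assoc]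

theorem walkWeightNat_congr {s : ℕ} {P Q : ℕ → ι} (h : ∀ t ≤ s, P t = Q t) :
    walkWeightNat B s P = walkWeightNat B s Q :=
  sum_congr rfl fun t ht => by
    rw [mem_range] at ht
    rw [h t ht.le, h (t + 1) ht]

theorem walkWeight_eq_walkWeightNat (k : ℕ) (P : ℕ → ι) :
    walkWeight B k (fun u : Fin (k + 1) => P u) = walkWeightNat B k P := by
  rw [walkWeight, walkWeightNat, ← Fin.sum_univ_eq_sum_range]
  rfl

theorem le_walkWeightNat_add {x : ι → ℝ} {s : ℕ} {P : ℕ → ι}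
    (h : ∀ t < s, x (P t) ≤ B (P t) (P (t + 1)) + x (P (t + 1))) :
    x (P 0) ≤ walkWeightNat B s P + x (P s) := by
  have htel := sum_range_sub' (fun t => x (P t)) s
  have : ∑ t ∈ range s, (x (P t) - x (P (t + 1))) ≤ walkWeightNat B s P :=
    sum_le_sum fun t ht => by linarith [h t (mem_range.1 ht)]
  linarith

theorem walkWeightNat_add_le {x : ι → ℝ} {s : ℕ} {P : ℕ → ι}
    (h : ∀ t < s, B (P t) (P (t + 1)) + x (P (t + 1)) ≤ x (P t)) :
    walkWeightNat B s P + x (P s) ≤ x (P 0) := by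
  have htel := sum_range_sub' (fun t => x (P t)) s
  have : walkWeightNat B s P ≤ ∑ t ∈ range s, (x (P t) - x (P (t + 1))) :=
    sum_le_sum fun t ht => by linarith [h t (mem_range.1 ht)]
  linarith

def walkCons (i : ι) (P : ℕ → ι) : ℕ → ι
  | 0 => i
  | t + 1 => P t

def walkSplice (P : ℕ → ι) (a d t : ℕ) : ι :=
  if t ≤ a then P t else P (t + d)

theorem walkSplice_of_le (P : ℕ → ι) {a d t : ℕ} (ht : t ≤ a) : walkSplice P a d t = P t :=
  if_pos ht

theorem walkSplice_of_ge {P : ℕ → ι} {a d t : ℕ} (hP : P a = P (a + d)) (ht : a ≤ t) :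
    walkSplice P a d t = P (t + d) := by
  rcases ht.eq_or_lt with rfl | ht
  · exact (walkSplice_of_le P le_rfl).trans hP
  · exact if_neg ht.not_ge

theorem walkWeightNat_splice {P : ℕ → ι} {a d : ℕ} (hP : P a = P (a + d)) (r : ℕ) :
    walkWeightNat B (a + d + r) P =
      walkWeightNat B (a + r) (walkSplice P a d) + walkWeightNat B d (fun t => P (a + t)) := by
  rw [walkWeightNat_add _ (a + d), walkWeightNat_add _ a d, walkWeightNat_add _ a r,
    walkWeightNat_congr B (s := a) fun t ht => walkSplice_of_le P ht,
    walkWeightNat_congr B (s := r) fun t _ => (walkSplice_of_ge hP (Nat.le_add_right a t)).trans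
      (congrArg P (Nat.add_right_comm a t d))]
  ring

theorem exists_lt_le_card_eq [Fintype ι] (P : ℕ → ι) :
    ∃ a b, a < b ∧ b ≤ Fintype.card ι ∧ P a = P b := by
  obtain ⟨a, b, hne, h⟩ := Fintype.exists_ne_map_eq_of_card_lt
    (fun t : Fin (Fintype.card ι + 1) => P t) (by simp)
  rcases lt_or_gt_of_ne (Fin.val_ne_of_ne hne) with hab | hab
  · exact ⟨a, b, hab, Nat.lt_succ_iff.1 b.2, h⟩
  · exact ⟨b, a, hab, Nat.lt_succ_iff.1 a.2, h.symm⟩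

/-- Only closed walks of length at most `card ι` are constrained; longer ones split into these. -/
def CycleWeightsNonpos [Fintype ι] : Prop :=
  ∀ s ≤ Fintype.card ι, ∀ P : ℕ → ι, P 0 = P s → walkWeightNat B s P ≤ 0

def CycleWeightsNeg [Fintype ι] : Prop :=
  ∀ s, 0 < s → s ≤ Fintype.card ι → ∀ P : ℕ → ι, P 0 = P s → walkWeightNat B s P < 0

variable {B}

theorem CycleWeightsNeg.nonpos [Fintype ι] (hB : CycleWeightsNeg B) : CycleWeightsNonpos B := by
  intro s hs P hP
  rcases Nat.eq_zero_or_pos s with rfl | hs0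
  · simp
  · exact (hB s hs0 hs P hP).le

end Walks

section KleeneStar

variable {ι : Type*} [Fintype ι] {B : ι → ι → ℝ}

theorem walkWeightNat_le_mpPow1 (m : ℕ) (P : ℕ → ι) :
    walkWeightNat B (m + 1) P ≤ mpPow1 B m (P 0) (P (m + 1)) := by
  induction m generalizing P with
  | zero => simp [walkWeightNat, mpPow1]
  | succ m ih =>
    rw [walkWeightNat_succ]
    calc _ ≤ B (P 0) (P 1) + mpPow1 B m (P 1) (P (m + 2)) := (add_le_add_iff_left _).2 (ih _)
      _ ≤ mpPow1 B (m + 1) (P 0) (P (m + 2)) :=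
        le_ciSup (Finite.bddAbove_range fun k => B (P 0) k + mpPow1 B m k (P (m + 2))) (P 1)

theorem exists_walkWeightNat_eq_mpPow1 (m : ℕ) (i j : ι) :
    ∃ P : ℕ → ι, P 0 = i ∧ P (m + 1) = j ∧
      walkWeightNat B (m + 1) P = mpPow1 B m i j := by
  induction m generalizing i with
  | zero => exact ⟨walkCons i fun _ => j, rfl, rfl, by simp [walkWeightNat, walkCons, mpPow1]⟩
  | succ m ih =>
    have : Nonempty ι := ⟨i⟩
    obtain ⟨k, hk⟩ := exists_eq_ciSup_of_finite (f := fun k => B i k + mpPow1 B m k j)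
    obtain ⟨P, hP0, hPj, hP⟩ := ih k
    refine ⟨walkCons i P, rfl, hPj, ?_⟩
    rw [walkWeightNat_succ]
    change B i (P 0) + walkWeightNat B (m + 1) P = _
    rw [hP0, hP]
    exact hk

variable [DecidableEq ι]

theorem kleeneStar_self_nonneg (i : ι) : 0 ≤ kleeneStar B i i := by
  rw [kleeneStar, if_pos rfl]
  exact le_max_left _ _

theorem mpPow1_le_kleeneStar {m : ℕ} (hm : m < Fintype.card ι - 1) (i j : ι) :
    mpPow1 B m i j ≤ kleeneStar B i j := by
  have h := le_ciSup (Finite.bddAbove_range fun t : Fin (Fintype.card ι - 1) => mpPow1 B t i j)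
    ⟨m, hm⟩
  unfold kleeneStar
  split_ifs with hij
  · subst hij
    exact h.trans (le_max_right _ _)
  · exact h

theorem kleeneStar_le_of_forall_walk {i j : ι} {r : ℝ}
    (h : ∀ s < Fintype.card ι, ∀ P : ℕ → ι, P 0 = i → P s = j →
      walkWeightNat B s P ≤ r) :
    kleeneStar B i j ≤ r := by
  have : Nonempty ι := ⟨i⟩
  have hpow (m : Fin (Fintype.card ι - 1)) : mpPow1 B m i j ≤ r := by
    obtain ⟨P, hP0, hPj, hP⟩ := exists_walkWeightNat_eq_mpPow1 (B := B) m i j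
    exact hP ▸ h _ (by omega) P hP0 hPj
  unfold kleeneStar
  split_ifs with hij
  · subst hij
    have h0 : 0 ≤ r := by simpa using h 0 Fintype.card_pos (fun _ => i) rfl rfl
    exact max_le h0 (Real.iSup_le hpow h0)
  · have := Fintype.one_lt_card_iff.2 ⟨i, j, hij⟩
    have : Nonempty (Fin (Fintype.card ι - 1)) := ⟨⟨0, by omega⟩⟩
    exact ciSup_le hpow

/-- A walk of length at least `card ι` revisits a vertex; cutting out the closed subwalk in between
does not decrease its weight. -/
theorem walkWeightNat_le_kleeneStar (hB : CycleWeightsNonpos B) (s : ℕ) (P : ℕ → ι) :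
    walkWeightNat B s P ≤ kleeneStar B (P 0) (P s) := by
  induction s using Nat.strong_induction_on generalizing P with
  | _ s ih =>
    rcases lt_or_ge s (Fintype.card ι) with hs | hs
    · rcases s with _ | m
      · simpa using kleeneStar_self_nonneg (P 0)
      · exact (walkWeightNat_le_mpPow1 m P).trans (mpPow1_le_kleeneStar (by omega) _ _)
    · obtain ⟨a, b, hab, hb, hP⟩ := exists_lt_le_card_eq P
      obtain ⟨d, rfl⟩ : ∃ d, b = a + d := ⟨b - a, by omega⟩
      obtain ⟨r, rfl⟩ : ∃ r, s = a + d + r := ⟨s - (a + d), by omega⟩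
      have hcyc := hB d (by omega) (fun t => P (a + t)) (by simpa using hP)
      have hrest := ih (a + r) (by omega) (walkSplice P a d)
      rw [walkSplice_of_le P (Nat.zero_le a), walkSplice_of_ge hP (Nat.le_add_right a r),
        Nat.add_right_comm] at hrest
      rw [walkWeightNat_splice B hP r]
      linarith

theorem add_kleeneStar_le (hB : CycleWeightsNonpos B) (i k j : ι) :
    B i k + kleeneStar B k j ≤ kleeneStar B i j := by
  suffices kleeneStar B k j ≤ kleeneStar B i j - B i k by linarith
  refine kleeneStar_le_of_forall_walk fun s _ P hP0 hPs => ?_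
  have h := walkWeightNat_le_kleeneStar hB (s + 1) (walkCons i P)
  rw [walkWeightNat_succ] at h
  change B i (P 0) + walkWeightNat B s P ≤ kleeneStar B i (P s) at h
  rw [hP0, hPs] at h
  linarith

end KleeneStar

section FixedPoint

variable {ι : Type*} [Fintype ι] [DecidableEq ι] {B : ι → ι → ℝ}

theorem le_kleeneStar_mulVec (c : ι → ℝ) (i : ι) : c i ≤ mpMulVec (kleeneStar B) c i :=
  le_trans (by linarith [kleeneStar_self_nonneg (B := B) i])
    (le_ciSup (Finite.bddAbove_range fun k => kleeneStar B i k + c k) i)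

theorem kleeneStar_mulVec_le {c x : ι → ℝ} (hx : ∀ i, max (mpMulVec B x i) (c i) ≤ x i)
    (i : ι) : mpMulVec (kleeneStar B) c i ≤ x i := by
  have : Nonempty ι := ⟨i⟩
  have hstep (u v : ι) : B u v + x v ≤ x u :=
    (le_ciSup (Finite.bddAbove_range fun v => B u v + x v) v).trans
      ((le_max_left _ _).trans (hx u))
  refine ciSup_le fun k => ?_
  suffices kleeneStar B i k ≤ x i - c k by linarith
  refine kleeneStar_le_of_forall_walk fun s _ P hP0 hPs => ?_
  have hwalk := walkWeightNat_add_le B (x := x) (s := s) (P := P) fun t _ => hstep _ _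
  have hc := (le_max_right _ _).trans (hx k)
  rw [hP0, hPs] at hwalk
  linarith

theorem mpMulVec_kleeneStar_mulVec_le (hB : CycleWeightsNonpos B) (c : ι → ℝ) (i : ι) :
    mpMulVec B (mpMulVec (kleeneStar B) c) i ≤ mpMulVec (kleeneStar B) c i := by
  have : Nonempty ι := ⟨i⟩
  refine ciSup_le fun k => ?_
  suffices mpMulVec (kleeneStar B) c k ≤ mpMulVec (kleeneStar B) c i - B i k by linarith
  refine ciSup_le fun k' => ?_
  have h1 := add_kleeneStar_le hB i k k'
  have h2 : kleeneStar B i k' + c k' ≤ mpMulVec (kleeneStar B) c i :=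
    le_ciSup (Finite.bddAbove_range fun k' => kleeneStar B i k' + c k') k'
  linarith

theorem kleeneStar_mulVec_fixed (hB : CycleWeightsNonpos B) (c : ι → ℝ) (i : ι) :
    max (mpMulVec B (mpMulVec (kleeneStar B) c) i) (c i) = mpMulVec (kleeneStar B) c i := by
  set y := mpMulVec (kleeneStar B) c
  refine le_antisymm (max_le (mpMulVec_kleeneStar_mulVec_le hB c i) (le_kleeneStar_mulVec c i)) ?_
  have : Nonempty ι := ⟨i⟩
  refine ciSup_le fun k => ?_
  suffices kleeneStar B i k ≤ max (mpMulVec B y i) (c i) - c k by linarith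
  refine kleeneStar_le_of_forall_walk fun s _ P hP0 hPs => ?_
  rcases s with _ | s
  · subst hP0 hPs
    simp
  · rw [walkWeightNat_succ]
    have h1 := walkWeightNat_le_kleeneStar hB s (fun t => P (t + 1))
    have h2 := le_ciSup (Finite.bddAbove_range fun k' => kleeneStar B (P 1) k' + c k') k
    have h3 := le_ciSup (Finite.bddAbove_range fun v => B i v + y v) (P 1)
    have h4 := le_max_left (mpMulVec B y i) (c i)
    simp only [hPs] at h1
    rw [hP0]
    change _ ≤ y (P 1) at h2
    change _ ≤ mpMulVec B y i at h3
    linarith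

/-- If `x` exceeded `B* ⊗ c` at some vertex, it would also do so at a maximising successor; the
resulting chain closes a cycle along which `x` telescopes to weight zero. -/
theorem eq_kleeneStar_mulVec_of_fixed (hB : CycleWeightsNeg B) {c x : ι → ℝ}
    (hx : ∀ i, max (mpMulVec B x i) (c i) = x i) (i : ι) :
    x i = mpMulVec (kleeneStar B) c i := by
  set y := mpMulVec (kleeneStar B) c
  refine le_antisymm ?_ (kleeneStar_mulVec_le (fun i => (hx i).le) i)
  by_contra! hi
  have hstep (u : ι) (hu : y u < x u) : ∃ v, y v < x v ∧ x u ≤ B u v + x v := by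
    have : Nonempty ι := ⟨u⟩
    have hxu : x u = mpMulVec B x u := by
      rcases max_cases (mpMulVec B x u) (c u) with ⟨h, _⟩ | ⟨h, _⟩
      · rw [← hx u, h]
      · linarith [le_kleeneStar_mulVec (B := B) c u, hx u]
    obtain ⟨v, hv⟩ := exists_eq_ciSup_of_finite (f := fun v => B u v + x v)
    have hyu := mpMulVec_kleeneStar_mulVec_le hB.nonpos c u
    have hyv := le_ciSup (Finite.bddAbove_range fun v => B u v + y v) v
    change _ = mpMulVec B x u at hv
    change _ ≤ mpMulVec B y u at hyv
    exact ⟨v, by linarith, by linarith⟩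
  choose! g hgy hgx using hstep
  have hiter (t : ℕ) : y (g^[t] i) < x (g^[t] i) := by
    induction t with
    | zero => exact hi
    | succ t ih => exact (Function.iterate_succ_apply' g t i).symm ▸ hgy _ ih
  obtain ⟨a, b, hab, hb, heq⟩ := exists_lt_le_card_eq fun t => g^[t] i
  obtain ⟨d, rfl⟩ : ∃ d, b = a + d := ⟨b - a, by omega⟩
  have hcyc := hB d (by omega) (by omega) (fun t => g^[a + t] i) (by simpa using heq)
  have hwalk := le_walkWeightNat_add B (x := x) (s := d) (P := fun t => g^[a + t] i)
    fun t _ => by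
      simp only [← Nat.add_assoc, Function.iterate_succ_apply']
      exact hgx _ (hiter _)
  simp only [Nat.add_zero, ← heq] at hwalk
  linarith

theorem fixed_iff_eq_kleeneStar_mulVec (hB : CycleWeightsNeg B) (c x : ι → ℝ) :
    (∀ i, max (mpMulVec B x i) (c i) = x i) ↔ ∀ i, x i = mpMulVec (kleeneStar B) c i := by
  refine ⟨fun h => eq_kleeneStar_mulVec_of_fixed hB h, fun h => ?_⟩
  obtain rfl : x = mpMulVec (kleeneStar B) c := funext h
  exact kleeneStar_mulVec_fixed hB.nonpos c

end FixedPoint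

section CycleMean

variable {ι : Type*} [Fintype ι]

theorem walkWeightNat_div_le_maxCycleMean (A : ι → ι → ℝ) {k : ℕ} (hk : 0 < k)
    (hkc : k ≤ Fintype.card ι) {P : ℕ → ι} (hP : P 0 = P k) :
    walkWeightNat A k P / k ≤ maxCycleMean A := by
  refine le_csSup ?_ ⟨k, hk, hkc, fun u => P u, by simpa using hP, by
    rw [walkWeight_eq_walkWeightNat]⟩
  refine (((Set.finite_Iic (Fintype.card ι)).biUnion fun m _ =>
    Set.finite_range fun P : Fin (m + 1) → ι => walkWeight A m P / m).subset ?_).bddAbove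
  rintro r ⟨m, -, hm, P, -, rfl⟩
  exact Set.mem_biUnion hm ⟨P, rfl⟩

theorem cycleWeightsNeg_of_maxCycleMean_lt {A : ι → ι → ℝ} {lam : ℝ}
    (h : maxCycleMean A < lam) : CycleWeightsNeg fun i j => A i j - lam := by
  intro k hk hkc P hP
  have hle := walkWeightNat_div_le_maxCycleMean A hk hkc hP
  have hk' : (0 : ℝ) < k := by exact_mod_cast hk
  rw [div_le_iff₀ hk'] at hle
  have hsub : walkWeightNat (fun i j => A i j - lam) k P = walkWeightNat A k P - k * lam := by
    simp [walkWeightNat, sum_sub_distrib]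
  rw [hsub]
  nlinarith

end CycleMean

section Lukasiewicz

variable {ι : Type*} [Fintype ι] [Nonempty ι] (A : ι → ι → ℝ) {lam : ℝ}

theorem lukMulVec_eq_max_zero (x : ι → ℝ) (i : ι) :
    lukMulVec A x i = max 0 (mpMulVec A x i - 1) :=
  (Monotone.map_ciSup_of_finite (g := fun t => max 0 (t - 1))
    (fun _ _ h => max_le_max le_rfl (sub_le_sub_right h 1)) _).symm

theorem mpMulVec_sub_const (c : ℝ) (x : ι → ℝ) (i : ι) :
    mpMulVec (fun i j => A i j - c) x i = mpMulVec A x i - c := by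
  rw [mpMulVec, mpMulVec, Monotone.map_ciSup_of_finite (g := fun t => t - c)
    (fun _ _ h => sub_le_sub_right h c)]
  simp only [sub_add_eq_add_sub]

theorem lukMulVec_eq_lukSMul_iff_of_le {x : ι → ℝ} {i : ι} (hx : 1 - lam ≤ x i) :
    lukMulVec A x i = lukSMul lam x i ↔
      max (mpMulVec (fun i j => A i j - lam) x i) (1 - lam) = x i := by
  rw [lukMulVec_eq_max_zero, lukSMul, max_eq_right (by linarith : (0 : ℝ) ≤ lam + x i - 1),
    mpMulVec_sub_const]
  rcases le_total (mpMulVec A x i) 1 with h | h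
  · rw [max_eq_left (by linarith), max_eq_right (by linarith)]
    constructor <;> intro <;> linarith
  · rw [max_eq_right (by linarith), max_eq_left (by linarith)]
    constructor <;> intro <;> linarith

theorem lukMulVec_eq_lukSMul_iff_of_ge {x : ι → ℝ} {i : ι} (hx : x i ≤ 1 - lam) :
    lukMulVec A x i = lukSMul lam x i ↔ ∀ j, A i j + x j ≤ 1 := by
  rw [lukMulVec_eq_max_zero, lukSMul, max_eq_left (by linarith : lam + x i - 1 ≤ 0),
    max_eq_left_iff, sub_nonpos, mpMulVec, ciSup_le_iff (Finite.bddAbove_range _)]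

end Lukasiewicz

theorem mpMulVec_eq_max_of_union {ι κ : Type*} [Fintype κ] [DecidableEq κ] {K L : Finset κ}
    (hcover : K ∪ L = univ) [Nonempty K] [Nonempty L] (A : ι → κ → ℝ) (x : κ → ℝ) (i : ι) :
    mpMulVec A x i = max (mpMulVec (fun i (k : K) => A i k) (fun k => x k) i)
      (mpMulVec (fun i (l : L) => A i l) (fun l => x l) i) := by
  have : Nonempty κ := ⟨(Classical.arbitrary K).1⟩
  refine le_antisymm (ciSup_le fun j => ?_)
    (max_le (ciSup_le fun k => le_ciSup (Finite.bddAbove_range fun j => A i j + x j) k.1)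
      (ciSup_le fun l => le_ciSup (Finite.bddAbove_range fun j => A i j + x j) l.1))
  rcases mem_union.1 (hcover ▸ mem_univ j : j ∈ K ∪ L) with h | h
  · exact (le_ciSup (Finite.bddAbove_range fun k : K => A i k + x k) ⟨j, h⟩).trans
      (le_max_left _ _)
  · exact (le_ciSup (Finite.bddAbove_range fun l : L => A i l + x l) ⟨j, h⟩).trans
      (le_max_right _ _)

section Eigenvectors

variable {n : ℕ} {A : Fin n → Fin n → ℝ} {lam : ℝ} {K L : Finset (Fin n)} {x : Fin n → ℝ}

variable (A) in
/-- The block `A^{(α)}_{KL}` of the paper. -/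
def shiftBlock (α : ℝ) (K L : Finset (Fin n)) : K → L → ℝ :=
  fun i j => A i j - α

variable (A lam K L) in
/-- The tropical Schur complement `Schur^{(1)}(K, λ, A)`. -/
noncomputable def tropicalSchur : L → L → ℝ :=
  fun i j => max (A i j - 1)
    (mpMul (shiftBlock A 1 L K)
      (mpMul (kleeneStar (shiftBlock A lam K K)) (shiftBlock A lam K L)) i j)

variable (A lam K L x) in
noncomputable def lukOffset (k : K) : ℝ :=
  max (mpMulVec (shiftBlock A lam K L) (fun j => x j) k) (1 - lam)

theorem lukEigen_K_iff_eq_kleeneStar_mulVec (hcover : K ∪ L = univ) [Nonempty K] [Nonempty L]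
    (hB : CycleWeightsNeg (shiftBlock A lam K K)) (hxK : ∀ k : K, 1 - lam ≤ x k) :
    (∀ k : K, lukMulVec A x k = lukSMul lam x k) ↔
      ∀ k : K, x k = mpMulVec (kleeneStar (shiftBlock A lam K K)) (lukOffset A lam K L x) k := by
  rw [← fixed_iff_eq_kleeneStar_mulVec hB]
  refine forall_congr' fun k => ?_
  have : Nonempty (Fin n) := ⟨k.1⟩
  rw [lukMulVec_eq_lukSMul_iff_of_le A (hxK k), mpMulVec_eq_max_of_union hcover, max_assoc]
  rfl

theorem tropicalSchur_add_le_zero_iff [Nonempty K] (l j : L) :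
    tropicalSchur A lam K L l j + x j ≤ 0 ↔ A l j + x j ≤ 1 ∧ ∀ k k' : K,
      A l k + kleeneStar (shiftBlock A lam K K) k k' + (A k' j - lam + x j) ≤ 1 := by
  rw [← le_neg_iff_add_nonpos_right, tropicalSchur, max_le_iff, mpMul,
    ciSup_le_iff (Finite.bddAbove_range _)]
  refine and_congr (by constructor <;> intro <;> linarith) (forall_congr' fun k => ?_)
  rw [← le_sub_iff_add_le', mpMul, ciSup_le_iff (Finite.bddAbove_range _)]
  refine forall_congr' fun k' => ?_
  unfold shiftBlock
  constructor <;> intro <;> linarith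

theorem forall_add_le_one_iff_tropicalSchur (hcover : K ∪ L = univ) [Nonempty K] [Nonempty L]
    (hLK : ∀ l ∈ L, ∀ k k' : K, A l k - lam + kleeneStar (shiftBlock A lam K K) k k' ≤ 0)
    (hxK : ∀ k : K,
      x k = mpMulVec (kleeneStar (shiftBlock A lam K K)) (lukOffset A lam K L x) k) :
    (∀ l : L, ∀ i, A l i + x i ≤ 1) ↔ ∀ l j : L, tropicalSchur A lam K L l j + x j ≤ 0 := by
  simp_rw [tropicalSchur_add_le_zero_iff]
  refine forall_congr' fun l => ?_
  have hcolK : (∀ k : K, A l k + x k ≤ 1) ↔ ∀ k k' : K, ∀ j : L,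
      A l k + kleeneStar (shiftBlock A lam K K) k k' + (A k' j - lam + x j) ≤ 1 := by
    refine forall_congr' fun k => ?_
    rw [hxK k, ← le_sub_iff_add_le', mpMulVec, ciSup_le_iff (Finite.bddAbove_range _)]
    refine forall_congr' fun k' => ?_
    rw [lukOffset, ← le_sub_iff_add_le', max_le_iff, mpMulVec,
      ciSup_le_iff (Finite.bddAbove_range _), and_iff_left (by linarith [hLK l l.2 k k'])]
    refine forall_congr' fun j => ?_
    unfold shiftBlock
    constructor <;> intro <;> linarith
  rw [forall_iff_of_union hcover, hcolK]
  exact ⟨fun ⟨hK, hL⟩ j => ⟨hL j, fun k k' => hK k k' j⟩,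
    fun h => ⟨fun k k' j => (h j).2 k k', fun j => (h j).1⟩⟩

end Eigenvectors

theorem stmt12_general {n : ℕ} (A : Fin n → Fin n → ℝ) (lam : ℝ)
    (K L : Finset (Fin n)) (hK : K.Nonempty) (hL : L.Nonempty) (hcover : K ∪ L = Finset.univ)
    (hrho : maxCycleMean (fun i j : ↥K => A i.1 j.1) < lam)
    (hLK : ∀ l ∈ L, ∀ k k' : ↥K,
      A l k.1 - lam + kleeneStar (fun i j : ↥K => A i.1 j.1 - lam) k k' ≤ 0)
    (S : ↥L → ↥L → ℝ)
    (hS : S = fun i j => max (A i.1 j.1 - 1)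
      (mpMul (fun (i : ↥L) (k : ↥K) => A i.1 k.1 - 1)
        (mpMul (kleeneStar (fun (i j : ↥K) => A i.1 j.1 - lam))
          (fun (k : ↥K) (j : ↥L) => A k.1 j.1 - lam)) i j))
    (x : Fin n → ℝ) (hx : ∀ i, x i ∈ Set.Icc (0 : ℝ) 1) :
    ((∀ i, lukMulVec A x i = lukSMul lam x i) ∧
        (∀ i ∈ K, 1 - lam ≤ x i) ∧ (∀ i ∈ L, x i ≤ 1 - lam)) ↔
      ((∀ j : ↥L, 0 ≤ x j.1 ∧ x j.1 ≤ min (1 - lam) (⨅ i : ↥L, -(S i j))) ∧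
        ∀ k : ↥K, x k.1 = ⨆ k' : ↥K,
          (kleeneStar (fun (i j : ↥K) => A i.1 j.1 - lam) k k' +
            max (⨆ j : ↥L, (A k'.1 j.1 - lam + x j.1)) (1 - lam))) := by
  subst hS
  have : Nonempty K := hK.to_subtype
  have : Nonempty L := hL.to_subtype
  have : Nonempty (Fin n) := ⟨hK.choose⟩
  have hB : CycleWeightsNeg (shiftBlock A lam K K) := cycleWeightsNeg_of_maxCycleMean_lt hrho
  have hrowsL (hxL : ∀ l : L, x l ≤ 1 - lam) :
      (∀ l : L, lukMulVec A x l = lukSMul lam x l) ↔ ∀ l : L, ∀ i, A l i + x i ≤ 1 :=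
    forall_congr' fun l => lukMulVec_eq_lukSMul_iff_of_ge A (hxL l)
  have hbound (j : L) : x j ≤ min (1 - lam) (⨅ i : L, -tropicalSchur A lam K L i j) ↔
      x j ≤ 1 - lam ∧ ∀ i, tropicalSchur A lam K L i j + x j ≤ 0 := by
    simp only [le_min_iff, le_ciInf_iff (Finite.bddBelow_range _), le_neg_iff_add_nonpos_left]
  rw [forall_iff_of_union hcover]
  constructor
  · rintro ⟨⟨hKeig, hLeig⟩, hxK, hxL⟩
    have hfix := (lukEigen_K_iff_eq_kleeneStar_mulVec hcover hB fun k => hxK k k.2).1 hKeig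
    have hS := (forall_add_le_one_iff_tropicalSchur hcover hLK hfix).1
      ((hrowsL fun l => hxL l l.2).1 hLeig)
    exact ⟨fun j => ⟨(hx j).1, (hbound j).2 ⟨hxL j j.2, fun i => hS i j⟩⟩, hfix⟩
  · rintro ⟨hxL, hfix⟩
    have hxL' (l : L) : x l ≤ 1 - lam := ((hbound l).1 (hxL l).2).1
    have hxK (k : K) : 1 - lam ≤ x k :=
      (hfix k).symm ▸ (le_max_right _ _).trans (le_kleeneStar_mulVec (lukOffset A lam K L x) k)
    have hS := (forall_add_le_one_iff_tropicalSchur hcover hLK hfix).2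
      fun l j => ((hbound j).1 (hxL j).2).2 l
    exact ⟨⟨(lukEigen_K_iff_eq_kleeneStar_mulVec hcover hB hxK).2 hfix, (hrowsL hxL').2 hS⟩,
      fun i hi => hxK ⟨i, hi⟩, fun i hi => hxL' ⟨i, hi⟩⟩

/-- explicit description of the `(K,L)` Łukasiewicz eigenvectors via the tropical
Schur complement `S = A^{(1)}_{LL} ⊕ A^{(1)}_{LK} ⊗ (A^{(λ)}_{KK})* ⊗ A^{(λ)}_{KL}`. -/
theorem stmt12 {n : ℕ} (A : Fin n → Fin n → ℝ) (hA : ∀ i j, A i j ∈ Set.Icc (0 : ℝ) 1)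
    (lam : ℝ) (hlam0 : 0 < lam) (hlam1 : lam < 1)
    (K L : Finset (Fin n)) (hK : K.Nonempty) (hL : L.Nonempty)
    (hdisj : Disjoint K L) (hcover : K ∪ L = Finset.univ)
    (hrho : maxCycleMean (fun i j : ↥K => A i.1 j.1) < lam)
    (hLK : ∀ l ∈ L, ∀ k k' : ↥K,
      A l k.1 - lam + kleeneStar (fun i j : ↥K => A i.1 j.1 - lam) k k' ≤ 0)
    (S : ↥L → ↥L → ℝ)
    (hS : S = fun i j => max (A i.1 j.1 - 1)
      (mpMul (fun (i : ↥L) (k : ↥K) => A i.1 k.1 - 1)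
        (mpMul (kleeneStar (fun (i j : ↥K) => A i.1 j.1 - lam))
          (fun (k : ↥K) (j : ↥L) => A k.1 j.1 - lam)) i j))
    (x : Fin n → ℝ) (hx : ∀ i, x i ∈ Set.Icc (0 : ℝ) 1) :
    ((∀ i, lukMulVec A x i = lukSMul lam x i) ∧
        (∀ i ∈ K, 1 - lam ≤ x i) ∧ (∀ i ∈ L, x i ≤ 1 - lam)) ↔
      ((∀ j : ↥L, 0 ≤ x j.1 ∧ x j.1 ≤ min (1 - lam) (⨅ i : ↥L, -(S i j))) ∧
        ∀ k : ↥K, x k.1 = ⨆ k' : ↥K,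
          (kleeneStar (fun (i j : ↥K) => A i.1 j.1 - lam) k k' +
            max (⨆ j : ↥L, (A k'.1 j.1 - lam + x j.1)) (1 - lam))) :=
  stmt12_general A lam K L hK hL hcover hrho hLK S hS x hx
end

section
/- Let A ∈ [0,1]^{n×n}, 0 < λ < 1, and let (K,L) be a secure partition of {1,…,n} with respect to D(A^(λ)) with K nonempty. Then: (1) there exists a node k ∈ K that is a secure node of D(A^(λ)_{KK}); (2) for k ∈ K, the partition (K ∖ {k}, L ∪ {k}) is secure with respect to D(A^(λ)) if and only if k is a secure node of D(A^(λ)_{KK}). -/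
open Finset

/-!
A walk inside `K` extends to a walk that starts in `L` by one edge of weight at least `-λ`, so
security of `(K, L)` bounds the weight of every walk in `D(A^{(λ)}_{KK})` by `λ`. Repeating a
closed walk then shows that all cycles there are nonpositive. If no node of `K` were secure,
chaining positive-weight walks, each starting where the previous one ends, would give walks of
unbounded weight; so a secure node exists. For `k ∈ K`, a walk from `k` inside `K` splits at its
last visit to `k` into a closed walk and a walk that never returns to `k`; the latter are exactly
the walks controlled by the partition `(K ∖ {k}, L ∪ {k})`.
-/

lemma nonpos_of_forall_nat_mul_le {x c : ℝ} (h : ∀ N : ℕ, (N : ℝ) * x ≤ c) : x ≤ 0 := by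
  by_contra! hx
  obtain ⟨N, hN⟩ := exists_nat_gt (c / x)
  rw [div_lt_iff₀ hx] at hN
  linarith [h N]

section NatWalk

variable {ι : Type*} (B : ι → ι → ℝ)

/-- `walkWeight` for walks indexed by `ℕ` (only `f 0, …, f len` matter), which are easier to
split and concatenate than walks indexed by `Fin (len + 1)`. -/
noncomputable def natWalkWeight (f : ℕ → ι) (len : ℕ) : ℝ :=
  ∑ t ∈ range len, B (f t) (f (t + 1))

lemma walkWeight_eq_natWalkWeight (f : ℕ → ι) (len : ℕ) :
    walkWeight B len (fun t => f t) = natWalkWeight B f len := by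
  rw [walkWeight, natWalkWeight, ← Fin.sum_univ_eq_sum_range (fun t => B (f t) (f (t + 1)))]
  simp only [Fin.val_castSucc, Fin.val_succ]

lemma walkWeight_cons (len : ℕ) (i : ι) (P : Fin (len + 1) → ι) :
    walkWeight B (len + 1) (Fin.cons i P) = B i (P 0) + walkWeight B len P := by
  simp only [walkWeight, Fin.sum_univ_succ, ← Fin.succ_castSucc]
  rfl

variable {B}

lemma natWalkWeight_congr {f g : ℕ → ι} {len : ℕ} (h : ∀ t ≤ len, f t = g t) :
    natWalkWeight B f len = natWalkWeight B g len :=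
  sum_congr rfl fun t ht => by
    rw [mem_range] at ht
    rw [h t ht.le, h (t + 1) ht]

variable (B)

lemma natWalkWeight_add (f : ℕ → ι) (a b : ℕ) :
    natWalkWeight B f (a + b) = natWalkWeight B f a + natWalkWeight B (fun t => f (a + t)) b := by
  simp only [natWalkWeight, sum_range_add, add_assoc]

lemma natWalkWeight_append (f g : ℕ → ι) (a b : ℕ) (h : g 0 = f a) :
    natWalkWeight B (fun t => if t ≤ a then f t else g (t - a)) (a + b)
      = natWalkWeight B f a + natWalkWeight B g b := by
  rw [natWalkWeight_add]
  congr 1 <;> refine natWalkWeight_congr fun t _ => ?_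
  · simp_all
  · rcases Nat.eq_zero_or_pos t with rfl | ht
    · simp [h]
    · simp [show ¬ a + t ≤ a by omega]

lemma natWalkWeight_mod_mul {f : ℕ → ι} {len : ℕ} (hf : f len = f 0) (N : ℕ) :
    natWalkWeight B (fun t => f (t % len)) (N * len) = N * natWalkWeight B f len := by
  induction N with
  | zero => simp [natWalkWeight]
  | succ N ih =>
    have hperiod : natWalkWeight B (fun t => f ((N * len + t) % len)) len
        = natWalkWeight B f len := by
      refine natWalkWeight_congr fun t ht => ?_
      rw [Nat.add_comm, Nat.add_mul_mod_self_right]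
      rcases ht.lt_or_eq with ht | rfl
      · rw [Nat.mod_eq_of_lt ht]
      · rw [Nat.mod_self, hf]
    rw [add_mul, one_mul, natWalkWeight_add, ih, hperiod]
    push_cast
    ring

lemma exists_natWalk_comp_val_eq {len : ℕ} (P : Fin (len + 1) → ι) :
    ∃ f : ℕ → ι, (fun t : Fin (len + 1) => f t) = P :=
  ⟨fun t => P ⟨min t len, by omega⟩,
    funext fun t => congrArg P (Fin.ext (min_eq_left (Nat.lt_succ_iff.1 t.2)))⟩

lemma forall_walkWeight_le_iff (c : ℝ) :
    (∀ len (P : Fin (len + 1) → ι), walkWeight B len P ≤ c)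
      ↔ ∀ f len, natWalkWeight B f len ≤ c := by
  refine ⟨fun h f len => walkWeight_eq_natWalkWeight B f len ▸ h len _, fun h len P => ?_⟩
  obtain ⟨f, rfl⟩ := exists_natWalk_comp_val_eq P
  rw [walkWeight_eq_natWalkWeight]
  exact h f len

lemma secureNode_iff_natWalkWeight (i : ι) :
    SecureNode B i ↔ ∀ f len, f 0 = i → natWalkWeight B f len ≤ 0 := by
  refine ⟨fun h f len hf => walkWeight_eq_natWalkWeight B f len ▸ h len _ hf,
    fun h len P hP => ?_⟩
  obtain ⟨f, rfl⟩ := exists_natWalk_comp_val_eq P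
  rw [walkWeight_eq_natWalkWeight]
  exact h f len hP

end NatWalk

section BoundedWalks

variable {ι : Type*} {B : ι → ι → ℝ} {c : ℝ}

lemma natWalkWeight_nonpos_of_closed (hB : ∀ f len, natWalkWeight B f len ≤ c)
    {f : ℕ → ι} {len : ℕ} (hf : f len = f 0) : natWalkWeight B f len ≤ 0 :=
  nonpos_of_forall_nat_mul_le fun N => natWalkWeight_mod_mul B hf N ▸ hB _ _

lemma exists_forall_natWalkWeight_nonpos [Finite ι] [Nonempty ι]
    (hB : ∀ f len, natWalkWeight B f len ≤ c) :
    ∃ i, ∀ f len, f 0 = i → natWalkWeight B f len ≤ 0 := by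
  by_contra! hpos
  choose walk len hstart hwalk using hpos
  obtain ⟨i₀, hmin⟩ := Finite.exists_min fun i => natWalkWeight B (walk i) (len i)
  set δ := natWalkWeight B (walk i₀) (len i₀)
  have hgrow : ∀ N : ℕ, ∃ f m, (N : ℝ) * δ ≤ natWalkWeight B f m := by
    intro N
    induction N with
    | zero => exact ⟨walk i₀, 0, by simp [natWalkWeight]⟩
    | succ N ih =>
      obtain ⟨f, m, hf⟩ := ih
      refine ⟨fun t => if t ≤ m then f t else walk (f m) (t - m), m + len (f m), ?_⟩
      rw [natWalkWeight_append B f (walk (f m)) m (len (f m)) (hstart _)]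
      push_cast
      linarith [hmin (f m)]
  have hδ : δ ≤ 0 := nonpos_of_forall_nat_mul_le fun N =>
    (hgrow N).elim fun f h => h.elim fun m hm => hm.trans (hB f m)
  exact (hwalk i₀).not_ge hδ

lemma natWalkWeight_nonpos_of_closed_of_nonreturning {i : ι}
    (hclosed : ∀ f len, f len = f 0 → natWalkWeight B f len ≤ 0)
    (hnonret : ∀ f len, f 0 = i → (∀ t, 0 < t → t ≤ len → f t ≠ i) →
      natWalkWeight B f len ≤ 0)
    {f : ℕ → ι} {len : ℕ} (hf : f 0 = i) : natWalkWeight B f len ≤ 0 := by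
  classical
  set T := Nat.findGreatest (fun t => f t = i) len
  have hTle : T ≤ len := Nat.findGreatest_le len
  have hT : f T = i := Nat.findGreatest_spec (P := fun t => f t = i) (Nat.zero_le len) hf
  obtain ⟨d, hd⟩ := Nat.exists_eq_add_of_le hTle
  rw [hd, natWalkWeight_add]
  have hcycle := hclosed f T (hT.trans hf.symm)
  have htail := hnonret (fun t => f (T + t)) d hT fun t ht htd =>
    Nat.findGreatest_is_greatest (P := fun t => f t = i) (n := len) (k := T + t) (by omega)
      (by omega)
  linarith

end BoundedWalks

section SecurePartition

variable {n : ℕ} {B : Fin n → Fin n → ℝ} {lam : ℝ} {K L : Finset (Fin n)}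

lemma walkWeight_restrict_le_of_securePartition (hB : ∀ i j, -lam ≤ B i j)
    (hs : SecurePartition B lam K L) (len : ℕ) (P : Fin (len + 1) → ↥K) :
    walkWeight (fun i j : ↥K => B i j) len P ≤ lam := by
  change walkWeight B len (fun t => (P t : Fin n)) ≤ lam
  unfold SecurePartition at hs
  split_ifs at hs with hL
  · exact hs len _
  obtain ⟨l, hl⟩ := nonempty_iff_ne_empty.2 hL
  have hfromL := hs (len + 1) (Fin.cons l fun t => (P t : Fin n)) (by simpa using hl)
    fun t ht => by
      obtain ⟨t, rfl⟩ := Fin.exists_succ_eq.2 ht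
      simp
  rw [walkWeight_cons] at hfromL
  linarith [hB l (P 0)]

lemma exists_secureNode_of_securePartition (hB : ∀ i j, -lam ≤ B i j)
    (hs : SecurePartition B lam K L) (hK : K.Nonempty) :
    ∃ k : ↥K, SecureNode (fun i j : ↥K => B i j) k := by
  have : Nonempty ↥K := hK.to_subtype
  simp only [secureNode_iff_natWalkWeight]
  exact exists_forall_natWalkWeight_nonpos
    ((forall_walkWeight_le_iff _ lam).1 (walkWeight_restrict_le_of_securePartition hB hs))

lemma securePartition_erase_insert_iff (hB : ∀ i j, -lam ≤ B i j)
    (hs : SecurePartition B lam K L) {k : Fin n} (hk : k ∈ K) :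
    SecurePartition B lam (K.erase k) (insert k L)
      ↔ SecureNode (fun i j : ↥K => B i j) ⟨k, hk⟩ := by
  rw [SecurePartition, if_neg (insert_ne_empty k L)]
  constructor
  · intro hsp
    rw [secureNode_iff_natWalkWeight]
    have hbounded := (forall_walkWeight_le_iff _ lam).1
      (walkWeight_restrict_le_of_securePartition hB hs)
    intro f len hf
    refine natWalkWeight_nonpos_of_closed_of_nonreturning
      (fun g m hg => natWalkWeight_nonpos_of_closed hbounded hg) (fun g m hg hret => ?_) hf
    · rw [← walkWeight_eq_natWalkWeight]
      refine hsp m (fun t => (g t : Fin n)) (by simp [hg]) fun t ht => mem_erase.2 ⟨?_, (g t).2⟩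
      exact fun h => hret t (Nat.pos_of_ne_zero (Fin.val_ne_zero_iff.2 ht)) (Nat.lt_succ_iff.1 t.2)
        (Subtype.ext h)
  · intro hsec len P hP0 hPK
    rcases mem_insert.1 hP0 with h0 | hL
    · have hPK' : ∀ t, P t ∈ K := fun t => by
        rcases eq_or_ne t 0 with rfl | ht
        · exact h0 ▸ hk
        · exact mem_of_mem_erase (hPK t ht)
      exact hsec len (fun t => ⟨P t, hPK' t⟩) (Subtype.ext h0)
    · rw [SecurePartition, if_neg (ne_empty_of_mem hL)] at hs
      exact hs len P hL fun t ht => mem_of_mem_erase (hPK t ht)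

end SecurePartition

theorem stmt15_general {n : ℕ} (A : Fin n → Fin n → ℝ) (hA : ∀ i j, A i j ∈ Set.Icc (0 : ℝ) 1)
    (lam : ℝ)
    (K L : Finset (Fin n))
    (hK : K.Nonempty)
    (hs : SecurePartition (fun i j => A i j - lam) lam K L) :
    (∃ k : ↥K, SecureNode (fun i j : ↥K => A i.1 j.1 - lam) k) ∧
      ∀ (k : Fin n) (hk : k ∈ K),
        (SecurePartition (fun i j => A i j - lam) lam (K.erase k) (insert k L) ↔
          SecureNode (fun i j : ↥K => A i.1 j.1 - lam) (⟨k, hk⟩ : ↥K)) := by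
  have hB : ∀ i j, -lam ≤ A i j - lam := fun i j => by linarith [(hA i j).1]
  exact ⟨exists_secureNode_of_securePartition hB hs hK,
    fun k hk => securePartition_erase_insert_iff hB hs hk⟩

/-- if `(K,L)` is a secure partition w.r.t. `D(A^{(λ)})` with `K` nonempty, then
(1) some node of `K` is a secure node of `D(A^{(λ)}_{KK})`, and (2) for `k ∈ K` the partition
`(K ∖ {k}, L ∪ {k})` is secure iff `k` is a secure node of `D(A^{(λ)}_{KK})`. -/
theorem stmt15 {n : ℕ} (A : Fin n → Fin n → ℝ) (hA : ∀ i j, A i j ∈ Set.Icc (0 : ℝ) 1)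
    (lam : ℝ) (hlam0 : 0 < lam) (hlam1 : lam < 1)
    (K L : Finset (Fin n)) (hdisj : Disjoint K L) (hcover : K ∪ L = Finset.univ)
    (hK : K.Nonempty)
    (hs : SecurePartition (fun i j => A i j - lam) lam K L) :
    (∃ k : ↥K, SecureNode (fun i j : ↥K => A i.1 j.1 - lam) k) ∧
      ∀ (k : Fin n) (hk : k ∈ K),
        (SecurePartition (fun i j => A i j - lam) lam (K.erase k) (insert k L) ↔
          SecureNode (fun i j : ↥K => A i.1 j.1 - lam) (⟨k, hk⟩ : ↥K)) :=
  stmt15_general A hA lam K L hK hs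
end

section
/- For every A ∈ [0,1]^{n×n}, the sequence of Łukasiewicz matrix powers {A^{⊗_L t}}_{t≥1} is ultimately periodic: there exist T ≥ 1 and p ≥ 1 such that A^{⊗_L (t+p)} = A^{⊗_L t} for all t ≥ T. Moreover, if ρ(A) < 1 then there exists T such that A^{⊗_L t} is the zero matrix for all t ≥ T. -/
open Finset

/-! Write `b = A - 1 ≤ 0`. By induction, every entry of `A^{⊗_L (t+1)}` equals `max 0 (1 + w)`
for the `b`-weight `w` of some walk of length `t + 1` (the maximum in the Łukasiewicz product is
attained, and truncation at `0` commutes with it because `b ≤ 0`).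

Periodicity: a walk weight is `∑ₑ kₑ bₑ`, with `kₑ` the number of traversals of the edge `e`. As
soon as `kₑ bₑ ≤ -1` for a single edge the entry is `0`, so truncating the counts at `⌈-1/bₑ⌉`
does not change the entry; hence the entries, and so the powers, range over a finite set, and
the sequence of powers, being an orbit of `X ↦ A ⊗_L X`, is ultimately periodic.

Vanishing: if `ρ(A) < 1`, every cycle of length at most `n` has `b`-weight at most `ρ(A) - 1 < 0`.
A walk of length `n` repeats a vertex and so contains such a cycle, and a walk of length
`m n` splits into `m` walks of length `n`; so long walks have `b`-weight `≤ -1`. -/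

variable {ι : Type*}

/-- Like `walkWeight`, but with the walk given as a sequence, of which only `Q 0, …, Q L` matter;
this makes splitting and shifting walks painless. -/
noncomputable def seqWalkWeight (B : ι → ι → ℝ) (L : ℕ) (Q : ℕ → ι) : ℝ :=
  ∑ t ∈ range L, B (Q t) (Q (t + 1))

section seqWalkWeight

variable (B : ι → ι → ℝ)

lemma seqWalkWeight_add (L M : ℕ) (Q : ℕ → ι) :
    seqWalkWeight B (L + M) Q = seqWalkWeight B L Q + seqWalkWeight B M (fun s => Q (L + s)) := by
  simp only [seqWalkWeight, sum_range_add, add_assoc]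

lemma seqWalkWeight_succ' (L : ℕ) (Q : ℕ → ι) :
    seqWalkWeight B (L + 1) Q = B (Q 0) (Q 1) + seqWalkWeight B L (fun s => Q (s + 1)) := by
  rw [seqWalkWeight, sum_range_succ', add_comm]
  rfl

lemma seqWalkWeight_nonpos {B} (hB : ∀ i j, B i j ≤ 0) (L : ℕ) (Q : ℕ → ι) :
    seqWalkWeight B L Q ≤ 0 :=
  sum_nonpos fun _ _ => hB _ _

lemma seqWalkWeight_sub_one (L : ℕ) (Q : ℕ → ι) :
    seqWalkWeight (fun i j => B i j - 1) L Q = seqWalkWeight B L Q - L := by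
  simp [seqWalkWeight, sum_sub_distrib]

lemma walkWeight_eq_seqWalkWeight (L : ℕ) (Q : ℕ → ι) :
    walkWeight B L (fun s => Q s) = seqWalkWeight B L Q := by
  simp [walkWeight, seqWalkWeight, Fin.sum_univ_eq_sum_range (fun t => B (Q t) (Q (t + 1)))]

lemma seqWalkWeight_eq_sum_card_mul [Fintype ι] [DecidableEq ι] (L : ℕ) (Q : ℕ → ι) :
    seqWalkWeight B L Q = ∑ e : ι × ι, #{t ∈ range L | (Q t, Q (t + 1)) = e} * B e.1 e.2 := by
  rw [seqWalkWeight, ← sum_fiberwise' (range L) (fun t => (Q t, Q (t + 1))) fun e => B e.1 e.2]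
  simp

end seqWalkWeight

lemma finite_range_max_zero_one_add_sum_mul {E : Type*} [Fintype E] (b : E → ℝ)
    (hb : ∀ e, b e ≤ 0) : (Set.range fun k : E → ℕ => max 0 (1 + ∑ e, k e * b e)).Finite := by
  classical
  -- `-1 / 0 = 0` makes `N e = 0` when `b e = 0`.
  set N : E → ℕ := fun e => ⌈-1 / b e⌉₊
  refine ((Set.finite_Iic N).image fun k => max 0 (1 + ∑ e, k e * b e)).subset ?_
  rintro _ ⟨k, rfl⟩
  refine ⟨k ⊓ N, Set.mem_Iic.2 inf_le_right, ?_⟩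
  dsimp only
  by_cases hcut : ∃ e, N e < k e ∧ b e < 0
  · obtain ⟨e, hNk, hbe⟩ := hcut
    have hNe : (N e : ℝ) * b e ≤ -1 := by
      have := Nat.le_ceil (-1 / b e)
      rw [div_le_iff_of_neg hbe] at this
      linarith
    have hsum : ∀ k' : E → ℕ, N e ≤ k' e → ∑ e, k' e * b e ≤ -1 := fun k' hk' => by
      rw [← add_sum_erase _ _ (mem_univ e)]
      have : (N e : ℝ) * b e ≥ k' e * b e :=
        mul_le_mul_of_nonpos_right (by exact_mod_cast hk') hbe.le
      linarith [sum_nonpos fun x (_ : x ∈ univ.erase e) =>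
        mul_nonpos_of_nonneg_of_nonpos (Nat.cast_nonneg (k' x)) (hb x)]
    rw [max_eq_left (by linarith [hsum (k ⊓ N) (le_min hNk.le le_rfl)]),
      max_eq_left (by linarith [hsum k hNk.le])]
  · push Not at hcut
    have hterm : ∀ e, ((k ⊓ N) e : ℝ) * b e = k e * b e := fun e => by
      rcases lt_or_ge (N e) (k e) with h | h
      · rw [(hb e).antisymm (hcut e h), mul_zero, mul_zero]
      · simp [h]
    simp only [hterm]

lemma max_zero_add_max_zero_sub_one {a : ℝ} (ha : a ≤ 1) (w : ℝ) :
    max 0 (a + max 0 (1 + w) - 1) = max 0 (1 + (a - 1 + w)) := by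
  rcases le_total 0 (1 + w) with h | h
  · rw [max_eq_right h]; ring_nf
  · rw [max_eq_left h, max_eq_left (by linarith), max_eq_left (by linarith)]

lemma Function.exists_iterate_add_eq_of_finite_range {α : Type*} {f : α → α} {x : α}
    (h : (Set.range fun t => f^[t] x).Finite) :
    ∃ T p : ℕ, 1 ≤ p ∧ ∀ t, T ≤ t → f^[t + p] x = f^[t] x := by
  obtain ⟨a, b, hab, hfab⟩ := Set.Finite.exists_lt_map_eq_of_forall_mem (Set.mem_range_self) h
  refine ⟨a, b - a, by omega, fun t ht => ?_⟩
  rw [show t + (b - a) = t - a + b by omega, Function.iterate_add_apply, ← hfab,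
    ← Function.iterate_add_apply, Nat.sub_add_cancel ht]

section lukPow1

variable [Fintype ι] (A : ι → ι → ℝ)

lemma lukPow1_eq_iterate (t : ℕ) : lukPow1 A t = (lukMul A)^[t] A := by
  induction t with
  | zero => rfl
  | succ t ih => rw [Function.iterate_succ_apply', ← ih, lukPow1]

variable (hA : ∀ i j, A i j ∈ Set.Icc (0 : ℝ) 1)
include hA

lemma exists_lukPow1_eq_max_zero_seqWalkWeight (t : ℕ) (i k : ι) :
    ∃ Q : ℕ → ι, Q 0 = i ∧
      lukPow1 A t i k = max 0 (1 + seqWalkWeight (fun i j => A i j - 1) (t + 1) Q) := by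
  induction t generalizing i with
  | zero =>
    refine ⟨fun s => if s = 0 then i else k, rfl, ?_⟩
    simp [lukPow1, seqWalkWeight, (hA i k).1]
  | succ t ih =>
    have : Nonempty ι := ⟨i⟩
    obtain ⟨j, hj⟩ := exists_eq_ciSup_of_finite (f := fun j => max 0 (A i j + lukPow1 A t j k - 1))
    obtain ⟨Q, hQ0, hQ⟩ := ih j
    refine ⟨fun s => if s = 0 then i else Q (s - 1), rfl, ?_⟩
    rw [lukPow1, lukMul, ← hj, seqWalkWeight_succ']
    simp [hQ, hQ0, max_zero_add_max_zero_sub_one (hA i j).2]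

lemma finite_range_lukPow1 : (Set.range (lukPow1 A)).Finite := by
  classical
  set V := Set.range fun k : ι × ι → ℕ => max 0 (1 + ∑ e, k e * (A e.1 e.2 - 1))
  have hV : V.Finite :=
    finite_range_max_zero_one_add_sum_mul _ fun e => by linarith [(hA e.1 e.2).2]
  refine (Set.Finite.pi fun _ => Set.Finite.pi fun _ => hV).subset ?_
  rintro _ ⟨t, rfl⟩ i - k -
  obtain ⟨Q, -, hQ⟩ := exists_lukPow1_eq_max_zero_seqWalkWeight A hA t i k
  exact ⟨_, by rw [hQ, seqWalkWeight_eq_sum_card_mul]⟩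

theorem lukPow1_eventually_periodic :
    ∃ T p : ℕ, 1 ≤ p ∧ ∀ t, T ≤ t → lukPow1 A (t + p) = lukPow1 A t := by
  have h := finite_range_lukPow1 A hA
  simp only [funext (lukPow1_eq_iterate A)] at h ⊢
  exact Function.exists_iterate_add_eq_of_finite_range h

end lukPow1

section cycles

variable [Fintype ι]

lemma seqWalkWeight_le_mul_maxCycleMean (A : ι → ι → ℝ) {d : ℕ} (hd : 1 ≤ d)
    (hdn : d ≤ Fintype.card ι) {Q : ℕ → ι} (hQ : Q 0 = Q d) :
    seqWalkWeight A d Q ≤ d * maxCycleMean A := by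
  rw [← div_le_iff₀' (by exact_mod_cast hd)]
  refine le_csSup (Set.Finite.bddAbove ?_)
    ⟨d, hd, hdn, fun s => Q s, by simpa using hQ, by rw [walkWeight_eq_seqWalkWeight]⟩
  refine ((Set.finite_Iic (Fintype.card ι)).biUnion fun k _ =>
    Set.finite_range fun P : Fin (k + 1) → ι => walkWeight A k P / k).subset ?_
  rintro _ ⟨k, -, hk, P, -, rfl⟩
  exact Set.mem_biUnion hk ⟨P, rfl⟩

variable {B : ι → ι → ℝ} (hB : ∀ i j, B i j ≤ 0) {ε : ℝ}
  (hcycle : ∀ d (Q : ℕ → ι), 1 ≤ d → d ≤ Fintype.card ι → Q 0 = Q d → seqWalkWeight B d Q ≤ -ε)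
include hB hcycle

lemma seqWalkWeight_card_le (Q : ℕ → ι) : seqWalkWeight B (Fintype.card ι) Q ≤ -ε := by
  obtain ⟨u, v, huv, hQ⟩ : ∃ u v : Fin (Fintype.card ι + 1), u < v ∧ Q u = Q v := by
    obtain ⟨u, v, hne, hQ⟩ :=
      Fintype.exists_ne_map_eq_of_card_lt (fun s : Fin (Fintype.card ι + 1) => Q s) (by simp)
    rcases hne.lt_or_gt with h | h
    · exact ⟨u, v, h, hQ⟩
    · exact ⟨v, u, h, hQ.symm⟩
  have hv := v.is_le
  rw [show Fintype.card ι = u + (v - u) + (Fintype.card ι - v) by omega, seqWalkWeight_add,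
    seqWalkWeight_add]
  have hcyc := hcycle (v - u) (fun s => Q (u + s)) (by omega) (by omega)
    (by simpa [show (u : ℕ) + (v - u) = v by omega] using hQ)
  linarith [seqWalkWeight_nonpos hB u Q,
    seqWalkWeight_nonpos hB (Fintype.card ι - v) fun s => Q (u + (v - u) + s)]

lemma seqWalkWeight_le_of_mul_card_le {m L : ℕ} (hL : m * Fintype.card ι ≤ L) (Q : ℕ → ι) :
    seqWalkWeight B L Q ≤ -(m * ε) := by
  induction m generalizing L Q with
  | zero => simpa using seqWalkWeight_nonpos hB L Q
  | succ m ih =>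
    rw [Nat.succ_mul] at hL
    rw [show L = Fintype.card ι + (L - Fintype.card ι) by omega, seqWalkWeight_add]
    have := ih (L := L - Fintype.card ι) (by omega) fun s => Q (Fintype.card ι + s)
    push_cast
    linarith [seqWalkWeight_card_le hB hcycle Q]

end cycles

theorem lukPow1_eventually_eq_zero [Fintype ι] (A : ι → ι → ℝ)
    (hA : ∀ i j, A i j ∈ Set.Icc (0 : ℝ) 1) (hρ : maxCycleMean A < 1) :
    ∃ T : ℕ, ∀ t, T ≤ t → lukPow1 A t = fun _ _ => 0 := by
  set B := fun i j => A i j - 1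
  have hB : ∀ i j, B i j ≤ 0 := fun i j => by linarith [(hA i j).2]
  have hcycle : ∀ d (Q : ℕ → ι), 1 ≤ d → d ≤ Fintype.card ι → Q 0 = Q d →
      seqWalkWeight B d Q ≤ -(1 - maxCycleMean A) := fun d Q hd hdn hQ => by
    have hd' : (1 : ℝ) ≤ d := by exact_mod_cast hd
    rw [seqWalkWeight_sub_one]
    nlinarith [seqWalkWeight_le_mul_maxCycleMean A hd hdn hQ]
  obtain ⟨m, hm⟩ := exists_nat_ge (1 / (1 - maxCycleMean A))
  refine ⟨m * Fintype.card ι, fun t ht => funext₂ fun i k => ?_⟩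
  obtain ⟨Q, -, hQ⟩ := exists_lukPow1_eq_max_zero_seqWalkWeight A hA t i k
  have hwalk := seqWalkWeight_le_of_mul_card_le hB hcycle (m := m) (L := t + 1) (by omega) Q
  rw [div_le_iff₀ (by linarith)] at hm
  rw [hQ, max_eq_left (by linarith)]

theorem stmt19_general {n : ℕ} (A : Fin n → Fin n → ℝ)
    (hA : ∀ i j, A i j ∈ Set.Icc (0 : ℝ) 1) :
    (∃ T p : ℕ, 1 ≤ p ∧ ∀ t, T ≤ t → lukPow1 A (t + p) = lukPow1 A t) ∧
      (maxCycleMean A < 1 → ∃ T : ℕ, ∀ t, T ≤ t → lukPow1 A t = fun _ _ => 0) :=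
  ⟨lukPow1_eventually_periodic A hA, lukPow1_eventually_eq_zero A hA⟩

/-- the sequence of Łukasiewicz matrix powers `{A^{⊗_L t}}_{t ≥ 1}` is ultimately
periodic, and if `ρ(A) < 1` then it is ultimately the zero matrix.
(Here `lukPow1 A s = A^{⊗_L (s+1)}`, so `s` ranges over `ℕ` as `t = s + 1` ranges over `t ≥ 1`.) -/
theorem stmt19 {n : ℕ} (hn : 0 < n) (A : Fin n → Fin n → ℝ)
    (hA : ∀ i j, A i j ∈ Set.Icc (0 : ℝ) 1) :
    (∃ T p : ℕ, 1 ≤ p ∧ ∀ t, T ≤ t → lukPow1 A (t + p) = lukPow1 A t) ∧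
      (maxCycleMean A < 1 → ∃ T : ℕ, ∀ t, T ≤ t → lukPow1 A t = fun _ _ => 0) :=
  stmt19_general A hA
end
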